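/- arXiv:1901.00585 — 4 statements merged into one kernel-verified Lean document; each statement's English description precedes it below -/
import Mathlib

section
/- Let X be a finite simple graph on n vertices with at least one edge, with minimal degree δ and largest Laplacian eigenvalue λ_max. Then the independence number α of X satisfies α ≤ n(1 − δ/λ_max). -/
open Finset

/-- The independence number: the largest size of a set of pairwise non-adjacent vertices. -/
noncomputable def indepNum {V : Type*} (G : SimpleGraph V) : ℕ :=
  sSup {n | ∃ s : Finset V, (∀ v ∈ s, ∀ w ∈ s, ¬ G.Adj v w) ∧ s.card = n}

/-- The degree of a vertex: the number of its neighbours. -/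
noncomputable def deg {V : Type*} (G : SimpleGraph V) (v : V) : ℕ :=
  (G.neighborSet v).ncard

/-- The minimal degree. -/
noncomputable def minDeg {V : Type*} (G : SimpleGraph V) : ℕ :=
  sInf (Set.range (deg G))

/-- The maximal degree. -/
noncomputable def maxDeg {V : Type*} (G : SimpleGraph V) : ℕ :=
  sSup (Set.range (deg G))

/-- The largest eigenvalue of the Laplacian matrix `L = D - A`. -/
noncomputable def lapMax {V : Type*} [Fintype V] (G : SimpleGraph V) : ℝ :=
  letI := Classical.decEq V
  letI := Classical.decRel G.Adj
  ⨆ i, (SimpleGraph.posSemidef_lapMatrix ℝ G).1.eigenvalues i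

/-- The derived graph: the induced subgraph on the vertices of non-maximal degree. -/
noncomputable def derived {V : Type*} (G : SimpleGraph V) :
    SimpleGraph {v : V | deg G v < maxDeg G} :=
  G.induce {v : V | deg G v < maxDeg G}

/-!
For an independent set `S` with `|S| = α`, test the Rayleigh quotient of the Laplacian on the
centred indicator `x = 1_S - (α / n) 1`. Adding a constant vector does not change `xᵀ L x`, and
since no edge lies inside `S`, `1_Sᵀ L 1_S` counts the edges leaving `S`, that is
`∑_{v ∈ S} d(v) ≥ δ α`. As `‖x‖² = α (1 - α / n)`, the Rayleigh bound `xᵀ L x ≤ λ_max ‖x‖²`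
gives `δ ≤ λ_max (1 - α / n)`.
-/

open Matrix

theorem Matrix.dotProduct_mulVec_conj {n : Type*} [Fintype n] (U M : Matrix n n ℝ) (y : n → ℝ) :
    (U *ᵥ y) ⬝ᵥ (M *ᵥ (U *ᵥ y)) = y ⬝ᵥ ((star U * M * U) *ᵥ y) := by
  rw [star_eq_conjTranspose, conjTranspose_eq_transpose_of_trivial, Matrix.mul_assoc,
    ← mulVec_mulVec, dotProduct_mulVec y, vecMul_transpose, mulVec_mulVec]

theorem Matrix.IsHermitian.dotProduct_mulVec_le {n : Type*} [Fintype n] [DecidableEq n]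
    {A : Matrix n n ℝ} (hA : A.IsHermitian) {c : ℝ} (hc : ∀ i, hA.eigenvalues i ≤ c)
    (x : n → ℝ) : x ⬝ᵥ (A *ᵥ x) ≤ c * (x ⬝ᵥ x) := by
  set U : Matrix n n ℝ := ↑hA.eigenvectorUnitary
  set y := star U *ᵥ x
  have hx : x = U *ᵥ y := by
    rw [mulVec_mulVec, Unitary.mul_star_self_of_mem hA.eigenvectorUnitary.2, one_mulVec]
  have hquad : x ⬝ᵥ (A *ᵥ x) = ∑ i, hA.eigenvalues i * (y i * y i) := by
    have hdiag := hA.conjStarAlgAut_star_eigenvectorUnitary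
    rw [Unitary.conjStarAlgAut_star_apply] at hdiag
    rw [hx, dotProduct_mulVec_conj, hdiag]
    simp [dotProduct, mulVec_diagonal, mul_left_comm]
  have hnorm : x ⬝ᵥ x = y ⬝ᵥ y := by
    calc x ⬝ᵥ x = (U *ᵥ y) ⬝ᵥ ((1 : Matrix n n ℝ) *ᵥ (U *ᵥ y)) := by rw [one_mulVec, ← hx]
      _ = y ⬝ᵥ y := by
        rw [dotProduct_mulVec_conj, Matrix.mul_one,
          Unitary.star_mul_self_of_mem hA.eigenvectorUnitary.2, one_mulVec]
  rw [hquad, hnorm, dotProduct, mul_sum]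
  exact sum_le_sum fun i _ => mul_le_mul_of_nonneg_right (hc i) (mul_self_nonneg _)

theorem Finset.sum_indicator_add_const_sq {V R : Type*} [Fintype V] [DecidableEq V] [CommRing R]
    (s : Finset V) (c : R) :
    ∑ v, ((if v ∈ s then 1 else 0) + c) ^ 2 = #s * (1 + 2 * c) + Fintype.card V * c ^ 2 := by
  simp only [add_sq, ite_pow, one_pow, ne_eq, OfNat.ofNat_ne_zero, not_false_eq_true, zero_pow,
    mul_ite, mul_one, mul_zero, ite_mul, zero_mul, sum_add_distrib, sum_ite_mem, univ_inter,
    sum_const, nsmul_eq_mul, card_univ]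
  ring

theorem SimpleGraph.dotProduct_lapMatrix_mulVec_add_const {V R : Type*} [Fintype V]
    [DecidableEq V] (G : SimpleGraph V) [DecidableRel G.Adj] [Field R] [CharZero R]
    (x : V → R) (c : R) :
    (fun v => x v + c) ⬝ᵥ (G.lapMatrix R *ᵥ fun v => x v + c) = x ⬝ᵥ (G.lapMatrix R *ᵥ x) := by
  simp only [← toLinearMap₂'_apply', lapMatrix_toLinearMap₂', add_sub_add_right_eq_sub]

theorem SimpleGraph.IsIndepSet.dotProduct_lapMatrix_mulVec_indicator {V R : Type*} [Fintype V]
    [DecidableEq V] {G : SimpleGraph V} [DecidableRel G.Adj] [CommRing R] {s : Finset V}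
    (hs : G.IsIndepSet s) :
    (fun v => if v ∈ s then 1 else 0) ⬝ᵥ (G.lapMatrix R *ᵥ fun v => if v ∈ s then 1 else 0) =
      ∑ v ∈ s, (G.degree v : R) := by
  have hnbr : ∀ v ∈ s, ∑ u ∈ G.neighborFinset v, (if u ∈ s then 1 else 0 : R) = 0 := fun v hv =>
    sum_eq_zero fun u hu => if_neg fun hu' =>
      hs hv hu' (G.ne_of_adj ((G.mem_neighborFinset v u).1 hu)) ((G.mem_neighborFinset v u).1 hu)
  simp only [dotProduct, ite_mul, one_mul, zero_mul, sum_ite_mem, univ_inter]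
  refine sum_congr rfl fun v hv => ?_
  rw [lapMatrix_mulVec_apply, hnbr v hv, if_pos hv, mul_one, sub_zero]

section

variable {V : Type*} (G : SimpleGraph V)

theorem deg_eq_degree [Fintype V] [DecidableRel G.Adj] (v : V) : deg G v = G.degree v := by
  rw [deg, Set.ncard_eq_toFinset_card', ← G.card_neighborSet_eq_degree, Set.toFinset_card]

theorem deg_pos_of_adj [Finite V] {v w : V} (h : G.Adj v w) : 0 < deg G v :=
  (Set.ncard_pos (Set.toFinite _)).2 ⟨w, h⟩

theorem minDeg_le_deg (v : V) : minDeg G ≤ deg G v := Nat.sInf_le ⟨v, rfl⟩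

theorem exists_isIndepSet_card_eq_indepNum [Fintype V] :
    ∃ s : Finset V, G.IsIndepSet s ∧ s.card = indepNum G := by
  let S := {n | ∃ s : Finset V, (∀ v ∈ s, ∀ w ∈ s, ¬ G.Adj v w) ∧ s.card = n}
  have hbdd : BddAbove S := ⟨Fintype.card V, by rintro _ ⟨s, -, rfl⟩; exact s.card_le_univ⟩
  obtain ⟨s, hs, hcard⟩ : indepNum G ∈ S := Nat.sSup_mem ⟨0, ∅, by simp, rfl⟩ hbdd
  exact ⟨s, fun v hv w hw _ => hs v hv w hw, hcard⟩

theorem dotProduct_lapMatrix_mulVec_le_lapMax [Fintype V] [DecidableEq V] [DecidableRel G.Adj]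
    (x : V → ℝ) : x ⬝ᵥ (G.lapMatrix ℝ *ᵥ x) ≤ lapMax G * (x ⬝ᵥ x) := by
  -- `lapMax` is built from the classical decidability instances.
  obtain rfl : ‹DecidableRel G.Adj› = Classical.decRel G.Adj := Subsingleton.elim _ _
  obtain rfl : ‹DecidableEq V› = Classical.decEq V := Subsingleton.elim _ _
  classical
  exact (G.posSemidef_lapMatrix ℝ).1.dotProduct_mulVec_le
    (fun i => le_ciSup (Set.finite_range _).bddAbove i) x

variable {G}

theorem SimpleGraph.IsIndepSet.sum_deg_le_lapMax_mul [Fintype V] {s : Finset V}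
    (hs : G.IsIndepSet s) (c : ℝ) :
    ∑ v ∈ s, (deg G v : ℝ) ≤ lapMax G * (#s * (1 + 2 * c) + Fintype.card V * c ^ 2) := by
  classical
  set x : V → ℝ := fun v => (if v ∈ s then 1 else 0) + c
  calc ∑ v ∈ s, (deg G v : ℝ) = x ⬝ᵥ (G.lapMatrix ℝ *ᵥ x) := by
        rw [G.dotProduct_lapMatrix_mulVec_add_const, hs.dotProduct_lapMatrix_mulVec_indicator]
        simp only [deg_eq_degree]
    _ ≤ lapMax G * (x ⬝ᵥ x) := dotProduct_lapMatrix_mulVec_le_lapMax G x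
    _ = _ := by rw [← sum_indicator_add_const_sq]; simp only [x, dotProduct, sq]

theorem deg_le_lapMax [Fintype V] (v : V) : (deg G v : ℝ) ≤ lapMax G := by
  have hv : G.IsIndepSet (({v} : Finset V) : Set V) := by simp
  simpa using hv.sum_deg_le_lapMax_mul 0

theorem SimpleGraph.IsIndepSet.card_le_card_mul_one_sub_minDeg_div_lapMax [Fintype V]
    (hne : ∃ v w, G.Adj v w) {s : Finset V} (hs : G.IsIndepSet s) :
    (#s : ℝ) ≤ Fintype.card V * (1 - minDeg G / lapMax G) := by
  obtain ⟨v, w, hvw⟩ := hne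
  set n : ℝ := (Fintype.card V : ℝ)
  have hn : 0 < n := Nat.cast_pos.2 (Fintype.card_pos_iff.2 ⟨v⟩)
  have hL : 0 < lapMax G := (Nat.cast_pos.2 (deg_pos_of_adj G hvw)).trans_le (deg_le_lapMax v)
  have hδL : (minDeg G : ℝ) ≤ lapMax G :=
    (Nat.cast_le.2 (minDeg_le_deg G v)).trans (deg_le_lapMax v)
  have hcore : minDeg G * (#s : ℝ) ≤ lapMax G * (#s - #s ^ 2 / n) :=
    calc minDeg G * (#s : ℝ) = ∑ _ ∈ s, (minDeg G : ℝ) := by rw [sum_const, nsmul_eq_mul, mul_comm]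
      _ ≤ ∑ v ∈ s, (deg G v : ℝ) := sum_le_sum fun v _ => Nat.cast_le.2 (minDeg_le_deg G v)
      _ ≤ lapMax G * (#s - #s ^ 2 / n) :=
        (hs.sum_deg_le_lapMax_mul (-#s / n)).trans_eq (by field_simp; ring)
  rcases s.eq_empty_or_nonempty with rfl | hs₀
  · simpa using mul_nonneg hn.le (sub_nonneg.2 ((div_le_one hL).2 hδL))
  have hα : (0 : ℝ) < #s := by exact_mod_cast hs₀.card_pos
  have hδ_le : (minDeg G : ℝ) ≤ lapMax G * (1 - #s / n) :=
    le_of_mul_le_mul_right (hcore.trans_eq (by ring)) hα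
  have hratio : (#s : ℝ) / n ≤ 1 - minDeg G / lapMax G := by
    rw [le_sub_comm, div_le_iff₀ hL]
    linarith
  exact (div_le_iff₀' hn).1 hratio

end

/-- **Hoffman-type bound** (Theorem 1): for a graph with at least one edge,
the independence number satisfies `α ≤ n (1 - δ / λ_max)`. -/
theorem hoffman_type_bound {V : Type*} [Fintype V] (G : SimpleGraph V)
    (hne : ∃ v w, G.Adj v w) :
    (indepNum G : ℝ) ≤ (Fintype.card V : ℝ) * (1 - (minDeg G : ℝ) / lapMax G) := by
  obtain ⟨s, hs, hcard⟩ := exists_isIndepSet_card_eq_indepNum G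
  rw [← hcard]
  exact hs.card_le_card_mul_one_sub_minDeg_div_lapMax hne
end

section
/- Let n, δ, Δ, λ, α' be real numbers with n > 0, 0 ≤ δ ≤ Δ < λ, and 0 ≤ α' ≤ n(1 − δ/λ). Then n(1 − Δ/λ) + α'(Δ − δ)/(λ − δ) ≤ (n/2)·(1 − Δ/λ + sqrt((1 − Δ/λ)² + 4α'(Δ − δ)/(nλ))) ≤ n(1 − δ/λ). In other words, the relative bound is at most the Godsil–Newman-type bound, which in turn is at most the Hoffman-type bound. -/
/-!
Write `a = 1 - Δ/λ`, `b = 1 - δ/λ` and `x = α'/n`, so that `0 ≤ a ≤ b` and `0 ≤ x ≤ b`.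
After dividing by `n`, the Godsil–Newman-type bound is the larger root of
`y (y - a) = x (b - a)`, the Hoffman-type bound is `b`, and the relative bound is
`a + q` with `q = x (b - a) / b`. Since `y ↦ y (y - a)` increases for `y ≥ a / 2`, both
inequalities reduce to comparing values of it: `(a + q) q ≤ b q = x (b - a)` and
`x (b - a) ≤ b (b - a)`.
-/

open Real

noncomputable def largerRoot (a p : ℝ) : ℝ :=
  (a + √(a ^ 2 + 4 * p)) / 2

theorem le_largerRoot {a p y : ℝ} (h : y * (y - a) ≤ p) : y ≤ largerRoot a p := by
  have hsq : (2 * y - a) ^ 2 ≤ a ^ 2 + 4 * p := by nlinarith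
  have := (le_abs_self (2 * y - a)).trans (abs_le_sqrt hsq)
  unfold largerRoot
  linarith

theorem largerRoot_le {a p y : ℝ} (hy : a ≤ 2 * y) (h : p ≤ y * (y - a)) :
    largerRoot a p ≤ y := by
  have : √(a ^ 2 + 4 * p) ≤ 2 * y - a :=
    (sqrt_le_left (by linarith)).mpr (by nlinarith)
  unfold largerRoot
  linarith

theorem add_div_le_largerRoot_le {a b x : ℝ} (ha : 0 ≤ a) (hab : a ≤ b) (hx : 0 ≤ x)
    (hxb : x ≤ b) :
    a + x * (b - a) / b ≤ largerRoot a (x * (b - a)) ∧ largerRoot a (x * (b - a)) ≤ b := by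
  refine ⟨le_largerRoot ?_, largerRoot_le (by linarith) (by nlinarith)⟩
  rcases hab.eq_or_lt with rfl | hab
  · simp
  have hb : 0 < b := ha.trans_lt hab
  set q := x * (b - a) / b with hq
  have hq0 : 0 ≤ q := by positivity
  have hqb : q * b = x * (b - a) := div_mul_cancel₀ _ hb.ne'
  have hqle : q ≤ b - a := by
    rw [hq, div_le_iff₀ hb]
    nlinarith
  calc (a + q) * (a + q - a) = (a + q) * q := by ring
    _ ≤ b * q := by nlinarith
    _ = x * (b - a) := by rw [mul_comm, hqb]

/-- The relative bound is at most the Godsil–Newman-type bound, which in turn is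
at most the Hoffman-type bound. -/
theorem relative_le_GN_le_hoffman (n δ Δ lam α' : ℝ)
    (hn : 0 < n) (hδ : 0 ≤ δ) (hδΔ : δ ≤ Δ) (hΔlam : Δ < lam)
    (hα0 : 0 ≤ α') (hα : α' ≤ n * (1 - δ / lam)) :
    n * (1 - Δ / lam) + α' * (Δ - δ) / (lam - δ)
        ≤ n / 2 * (1 - Δ / lam
          + Real.sqrt ((1 - Δ / lam) ^ 2 + 4 * α' * (Δ - δ) / (n * lam))) ∧
      n / 2 * (1 - Δ / lam
          + Real.sqrt ((1 - Δ / lam) ^ 2 + 4 * α' * (Δ - δ) / (n * lam)))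
        ≤ n * (1 - δ / lam) := by
  have hlam : 0 < lam := by linarith
  have hlamδ : lam - δ ≠ 0 := by linarith
  have ha : 0 ≤ 1 - Δ / lam := by rw [sub_nonneg, div_le_one hlam]; exact hΔlam.le
  have hab : 1 - Δ / lam ≤ 1 - δ / lam := by gcongr
  have hxb : α' / n ≤ 1 - δ / lam := by rwa [div_le_iff₀ hn, mul_comm]
  have hrel : n * (1 - Δ / lam) + α' * (Δ - δ) / (lam - δ) = n * ((1 - Δ / lam)
      + α' / n * ((1 - δ / lam) - (1 - Δ / lam)) / (1 - δ / lam)) := by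
    field_simp
    ring
  have hGN : n / 2 * (1 - Δ / lam
      + √((1 - Δ / lam) ^ 2 + 4 * α' * (Δ - δ) / (n * lam))) =
      n * largerRoot (1 - Δ / lam) (α' / n * ((1 - δ / lam) - (1 - Δ / lam))) := by
    unfold largerRoot
    field_simp
    ring_nf
  obtain ⟨hrel_le, hGN_le⟩ := add_div_le_largerRoot_le ha hab (div_nonneg hα0 hn.le) hxb
  rw [hrel, hGN]
  exact ⟨mul_le_mul_of_nonneg_left hrel_le hn.le, mul_le_mul_of_nonneg_left hGN_le hn.le⟩
end

section
/- Let a ≥ 1, b ≥ 2, k ≥ 2 be integers, let n = a + b, and let X be the complete split graph on n vertices given by the join of the complete graph K_a with the empty graph on b vertices. Let P_{2k} be the path graph on 2k vertices. Then the independence number of the Cartesian product satisfies α(X □ P_{2k}) ≤ bk + 2b + 3k. -/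
open Finset

/-- The complete split graph `K_a ∨ b K_1`: a clique of size `a` joined to an
independent set of size `b`; two distinct vertices are adjacent exactly when at
least one of them lies in the clique part. -/
def completeSplitGraph (a b : ℕ) : SimpleGraph (Fin a ⊕ Fin b) where
  Adj u v := u ≠ v ∧ (u.isLeft ∨ v.isLeft)
  symm := ⟨by rintro u v ⟨h1, h2⟩; exact ⟨h1.symm, h2.symm⟩⟩
  loopless := ⟨by rintro u ⟨h, -⟩; exact h rfl⟩

/-!
Cut `X □ P_{2k}` into the `k` blocks of layers `{2j, 2j+1}`. The two layers of an independent
set inside a block project to disjoint independent sets of `X`. In `K_a ∨ b K_1` an independent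
set meeting the clique is a single vertex, and otherwise lies in the `b` independent vertices,
so two disjoint independent sets have at most `b + 1` vertices in total. Hence
`α(X □ P_{2k}) ≤ k (b + 1)`, which is at most `bk + 2b + 3k`.
-/

open SimpleGraph hiding indepNum

variable {V : Type*}

theorem indepNum_le_of_forall_isIndepSet {G : SimpleGraph V} {m : ℕ}
    (h : ∀ s : Finset V, G.IsIndepSet s → s.card ≤ m) : indepNum G ≤ m := by
  refine csSup_le ⟨0, ∅, by simp, rfl⟩ ?_
  rintro _ ⟨s, hs, rfl⟩
  exact h s fun v hv w hw _ => hs v hv w hw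

section Layer

variable [DecidableEq V] {n : ℕ}

/-- The `i`-th layer of `s ⊆ V × Fin n`, projected to `V`. It is indexed by `ℕ` (and empty for
`i ≥ n`) so that the layers `2j` and `2j + 1` need no bound proofs. -/
def Finset.layer (s : Finset (V × Fin n)) (i : ℕ) : Finset V :=
  (s.filter fun p => (p.2 : ℕ) = i).image Prod.fst

theorem Finset.mem_layer {s : Finset (V × Fin n)} {i : ℕ} {v : V} :
    v ∈ s.layer i ↔ ∃ j : Fin n, (j : ℕ) = i ∧ (v, j) ∈ s := by
  simp [layer, and_comm]

theorem Finset.card_eq_sum_card_layer (s : Finset (V × Fin n)) :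
    s.card = ∑ i ∈ range n, (s.layer i).card := by
  rw [card_eq_sum_card_fiberwise fun p _ => mem_range.mpr p.2.isLt]
  refine sum_congr rfl fun i _ => (card_image_of_injOn ?_).symm
  rintro ⟨v, j⟩ hp ⟨w, j'⟩ hq (rfl : v = w)
  have hj : (j : ℕ) = j' := (mem_filter.mp hp).2.trans (mem_filter.mp hq).2.symm
  rw [Fin.ext hj]

theorem isIndepSet_layer {G : SimpleGraph V} {H : SimpleGraph (Fin n)} {s : Finset (V × Fin n)}
    (hs : (G □ H).IsIndepSet s) (i : ℕ) : G.IsIndepSet (s.layer i) := by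
  intro v hv w hw hvw hadj
  obtain ⟨j, hj, hvj⟩ := mem_layer.mp hv
  obtain ⟨j', hj', hwj⟩ := mem_layer.mp hw
  obtain rfl : j = j' := Fin.ext (hj.trans hj'.symm)
  exact hs hvj hwj (by simpa using hvw) (boxProd_adj.mpr (Or.inl ⟨hadj, rfl⟩))

theorem disjoint_layer_succ {G : SimpleGraph V} {s : Finset (V × Fin n)}
    (hs : (G □ pathGraph n).IsIndepSet s) (i : ℕ) : Disjoint (s.layer i) (s.layer (i + 1)) := by
  refine Finset.disjoint_left.mpr fun v hv hv' => ?_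
  obtain ⟨j, hj, hvj⟩ := mem_layer.mp hv
  obtain ⟨j', hj', hvj'⟩ := mem_layer.mp hv'
  have hadj : (pathGraph n).Adj j j' := pathGraph_adj.mpr (Or.inl (by omega))
  exact hs hvj hvj' (by simpa using hadj.ne) (boxProd_adj.mpr (Or.inr ⟨hadj, rfl⟩))

end Layer

theorem Finset.sum_range_two_mul_le {f : ℕ → ℕ} {m : ℕ} (hf : ∀ j, f (2 * j) + f (2 * j + 1) ≤ m)
    (k : ℕ) : ∑ i ∈ range (2 * k), f i ≤ k * m := by
  induction k with
  | zero => simp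
  | succ k ih =>
    rw [Nat.mul_succ, sum_range_succ, sum_range_succ]
    linarith [hf k]

theorem indepNum_boxProd_pathGraph_le {G : SimpleGraph V} {m : ℕ}
    (hm : ∀ A B : Finset V, G.IsIndepSet A → G.IsIndepSet B → Disjoint A B →
      A.card + B.card ≤ m) (k : ℕ) :
    indepNum (G □ pathGraph (2 * k)) ≤ k * m := by
  classical
  refine indepNum_le_of_forall_isIndepSet fun s hs => ?_
  rw [card_eq_sum_card_layer]
  exact sum_range_two_mul_le
    (fun j => hm _ _ (isIndepSet_layer hs _) (isIndepSet_layer hs _) (disjoint_layer_succ hs _)) k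

namespace completeSplitGraph

variable {a b : ℕ} {A : Finset (Fin a ⊕ Fin b)}

theorem card_le_one_of_isIndepSet (hA : (completeSplitGraph a b).IsIndepSet A)
    {v : Fin a ⊕ Fin b} (hv : v ∈ A) (hleft : v.isLeft) : A.card ≤ 1 := by
  have hall : ∀ w ∈ A, w = v := fun w hw => by
    by_contra hne
    exact hA hw hv hne ⟨hne, Or.inr hleft⟩
  exact card_le_one.mpr fun w hw w' hw' => (hall w hw).trans (hall w' hw').symm

theorem card_le_of_forall_isRight (hA : ∀ v ∈ A, v.isRight) : A.card ≤ b := by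
  have hsub : A ⊆ univ.image Sum.inr := fun v hv => by
    obtain ⟨y, rfl⟩ := Sum.isRight_iff.mp (hA v hv)
    exact mem_image_of_mem _ (mem_univ y)
  simpa using card_le_card hsub |>.trans card_image_le

theorem card_le_of_isIndepSet (hb : 1 ≤ b) (hA : (completeSplitGraph a b).IsIndepSet A) :
    A.card ≤ b := by
  by_cases hleft : ∃ v ∈ A, v.isLeft
  · obtain ⟨v, hv, hvl⟩ := hleft
    exact (card_le_one_of_isIndepSet hA hv hvl).trans hb
  · push Not at hleft
    exact card_le_of_forall_isRight fun v hv => Sum.not_isLeft.mp (hleft v hv)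

theorem card_add_card_le {B : Finset (Fin a ⊕ Fin b)} (hb : 1 ≤ b)
    (hA : (completeSplitGraph a b).IsIndepSet A) (hB : (completeSplitGraph a b).IsIndepSet B)
    (hAB : Disjoint A B) : A.card + B.card ≤ b + 1 := by
  by_cases hAleft : ∃ v ∈ A, v.isLeft
  · obtain ⟨v, hv, hvl⟩ := hAleft
    linarith [card_le_one_of_isIndepSet hA hv hvl, card_le_of_isIndepSet hb hB]
  by_cases hBleft : ∃ v ∈ B, v.isLeft
  · obtain ⟨v, hv, hvl⟩ := hBleft
    linarith [card_le_one_of_isIndepSet hB hv hvl, card_le_of_isIndepSet hb hA]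
  push Not at hAleft hBleft
  have hunion : (A ∪ B).card ≤ b := card_le_of_forall_isRight fun v hv => by
    rcases mem_union.mp hv with hv | hv
    exacts [Sum.not_isLeft.mp (hAleft v hv), Sum.not_isLeft.mp (hBleft v hv)]
  rw [card_union_of_disjoint hAB] at hunion
  omega

end completeSplitGraph

theorem indepNum_completeSplit_boxProd_path_general (a b k : ℕ)
    (hb : 2 ≤ b) :
    indepNum ((completeSplitGraph a b).boxProd (SimpleGraph.pathGraph (2 * k)))
      ≤ b * k + 2 * b + 3 * k := by
  calc _ ≤ k * (b + 1) := indepNum_boxProd_pathGraph_le (fun _ _ hA hB hAB =>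
        completeSplitGraph.card_add_card_le (Nat.one_le_of_lt hb) hA hB hAB) k
    _ ≤ b * k + 2 * b + 3 * k := by nlinarith

/-- The independence number of the Cartesian product of the complete split graph
`K_a ∨ b K_1` with the path graph `P_{2k}` is at most `bk + 2b + 3k`. -/
theorem indepNum_completeSplit_boxProd_path (a b k : ℕ)
    (ha : 1 ≤ a) (hb : 2 ≤ b) (hk : 2 ≤ k) :
    indepNum ((completeSplitGraph a b).boxProd (SimpleGraph.pathGraph (2 * k)))
      ≤ b * k + 2 * b + 3 * k :=
  indepNum_completeSplit_boxProd_path_general a b k hb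
end

section
/- Let F be a finite field with q elements and let ER_q be the Erdős–Rényi graph over F: its vertices are the points of the projective plane over F (nonzero vectors of F³ up to scalar), with distinct vertices [x] and [y] adjacent exactly when x₁y₁ + x₂y₂ + x₃y₃ = 0. Then: the vertices [x] with x·x = 0 (the absolute points) are exactly the vertices of degree q, every other vertex has degree q + 1, there are exactly q + 1 absolute points, and the set of absolute points is an independent set of ER_q. -/
/-- The orthogonality graph over a field `F`: vertices are the points of the
projective space of `F^n` (nonzero vectors up to scalar), and two distinct
vertices `[x]` and `[y]` are adjacent exactly when `x₁y₁ + … + xₙyₙ = 0`. -/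
noncomputable def orthoGraph (F : Type*) [Field F] (n : ℕ) :
    SimpleGraph (Projectivization F (Fin n → F)) where
  Adj x y := x ≠ y ∧ ∑ i, x.rep i * y.rep i = 0
  symm := by
    constructor
    rintro x y ⟨hxy, h⟩
    exact ⟨hxy.symm, by rw [← h]; exact Finset.sum_congr rfl fun i _ => mul_comm _ _⟩
  loopless := by constructor; rintro x ⟨h, -⟩; exact h rfl

/-!
The neighbours of `[x]` are the points of the polar line `x^⊥` other than `[x]`, a projective
line has `q + 1` points, and `[x]` lies on its own polar exactly when it is absolute.
The absolute points form the conic `x₁² + x₂² + x₃² = 0`. Both the line and the conic have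
an affine cone of `q²` vectors, hence `(q² - 1)/(q - 1) = q + 1` points: in characteristic `2`
the cone of the conic is the plane `x₁ + x₂ + x₃ = 0`, otherwise a quadratic-character sum
counts it.
Two orthogonal absolute points `x`, `y` are both parallel to `x × y` by the triple-product
expansion, hence equal.
-/

open Matrix Finset
open scoped LinearAlgebra.Projectivization

section QuadraticChar

variable {F : Type*} [Field F] [Fintype F] [DecidableEq F]

lemma sum_quadraticChar_add_right (hF : ringChar F ≠ 2) (c : F) :
    ∑ u, quadraticChar F (u + c) = 0 :=
  (Equiv.sum_comp (Equiv.addRight c) (quadraticChar F)).trans (quadraticChar_sum_zero hF)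

lemma sum_comp_sq (hF : ringChar F ≠ 2) (g : F → ℤ) :
    ∑ x, g (x ^ 2) = ∑ u, (quadraticChar F u + 1) * g u := by
  rw [← sum_fiberwise univ (fun x => x ^ 2)]
  refine sum_congr rfl fun u _ => ?_
  rw [sum_congr rfl fun x hx => congrArg g (mem_filter.mp hx).2, sum_const,
    nsmul_eq_mul, ← quadraticChar_card_sqrts hF u, Set.toFinset_ofPred]

lemma sum_ite_sq_eq (hF : ringChar F ≠ 2) (a : F) :
    ∑ x : F, (if x ^ 2 = a then 1 else 0 : ℤ) = quadraticChar F a + 1 := by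
  rw [sum_comp_sq hF fun u => if u = a then 1 else 0]
  simp

lemma sum_quadraticChar_sq_add (hF : ringChar F ≠ 2) (c : F) :
    ∑ x, quadraticChar F (x ^ 2 + c) = (if c = 0 then Fintype.card F else 0 : ℤ) - 1 := by
  split_ifs with hc
  · subst hc
    rw [← sum_erase_add _ _ (mem_univ 0),
      sum_congr rfl fun x hx => by rw [add_zero, quadraticChar_sq_one' (ne_of_mem_erase hx)]]
    simp [card_erase_of_mem, Nat.cast_sub Fintype.card_pos]
  · -- `u (u + c) = u² (1 + c u⁻¹)`, and `u ↦ c u⁻¹` permutes `F`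
    have hsplit : ∀ u, quadraticChar F u * quadraticChar F (u + c)
        = quadraticChar F (1 + c * u⁻¹) - if u = 0 then 1 else 0 := by
      intro u
      split_ifs with hu
      · simp [hu]
      · rw [sub_zero, ← map_mul, ← one_mul (quadraticChar F (1 + c * u⁻¹)),
          ← quadraticChar_sq_one' hu, ← map_mul]
        congr 1
        field_simp
    have hinv : ∑ u, quadraticChar F (1 + c * u⁻¹) = 0 := by
      refine (Equiv.sum_comp ((Equiv.inv F).trans (Equiv.mulLeft₀ c hc))
        fun s => quadraticChar F (1 + s)).trans ?_
      simpa only [add_comm _ (1 : F)] using sum_quadraticChar_add_right hF 1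
    calc ∑ x, quadraticChar F (x ^ 2 + c)
        = ∑ u, (quadraticChar F u * quadraticChar F (u + c) + quadraticChar F (u + c)) := by
          rw [sum_comp_sq hF fun u => quadraticChar F (u + c)]
          exact sum_congr rfl fun u _ => by ring
      _ = -1 := by
          rw [sum_add_distrib, sum_quadraticChar_add_right hF, sum_congr rfl fun u _ => hsplit u,
            sum_sub_distrib, hinv]
          simp

lemma sum_quadraticChar_sq_add_sq (hF : ringChar F ≠ 2) :
    ∑ y : F, ∑ z : F, quadraticChar F (y ^ 2 + z ^ 2) = 0 := by
  rw [sum_comm]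
  simp_rw [sum_quadraticChar_sq_add hF, sq_eq_zero_iff]
  simp [sum_sub_distrib]

lemma ncard_setOf_dotProduct_self_eq_zero_of_ringChar_ne_two (hF : ringChar F ≠ 2) :
    ({v : Fin 3 → F | v ⬝ᵥ v = 0}.ncard : ℤ) = Fintype.card F ^ 2 := by
  have hsq : ∑ w : Fin 2 → F, quadraticChar F (w ⬝ᵥ w) = 0 := by
    rw [← (finTwoArrowEquiv F).symm.sum_comp, Fintype.sum_prod_type]
    simpa [dotProduct, Fin.sum_univ_two, sq] using sum_quadraticChar_sq_add_sq hF
  calc ({v : Fin 3 → F | v ⬝ᵥ v = 0}.ncard : ℤ)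
      = ∑ v : Fin 3 → F, if v ⬝ᵥ v = 0 then 1 else 0 := by
        rw [Set.ncard_eq_toFinset_card', Set.toFinset_ofPred, card_filter]
        push_cast
        rfl
    _ = ∑ w : Fin 2 → F, ∑ x : F, if x ^ 2 = -(w ⬝ᵥ w) then 1 else 0 := by
        rw [← (Fin.consEquiv fun _ => F).sum_comp, Fintype.sum_prod_type, sum_comm]
        refine sum_congr rfl fun w _ => sum_congr rfl fun x _ => ?_
        change (if vecCons x w ⬝ᵥ vecCons x w = 0 then _ else _) = _
        simp_rw [cons_dotProduct_cons, sq, eq_neg_iff_add_eq_zero]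
    _ = ∑ w : Fin 2 → F, (quadraticChar F (-1) * quadraticChar F (w ⬝ᵥ w) + 1) := by
        simp_rw [sum_ite_sq_eq hF, ← map_mul, neg_one_mul]
    _ = Fintype.card F ^ 2 := by
        rw [sum_add_distrib, ← mul_sum, hsq]
        simp

end QuadraticChar

section DotProduct

variable {F : Type*} [Field F] [Fintype F]

lemma ncard_setOf_dotProduct_eq_zero {m : Type*} [Fintype m] [DecidableEq m] {a : m → F}
    (ha : a ≠ 0) :
    {v : m → F | a ⬝ᵥ v = 0}.ncard = Fintype.card F ^ (Fintype.card m - 1) := by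
  have hrank := Module.Dual.finrank_ker_add_one_of_ne_zero
    ((LinearEquiv.map_ne_zero_iff (dotProductEquiv F m)).2 ha)
  rw [Module.finrank_fintype_fun_eq_card] at hrank
  have hker : {v : m → F | a ⬝ᵥ v = 0} = LinearMap.ker (dotProductEquiv F m a) := by
    ext v
    simp
  rw [hker, ← Nat.card_coe_set_eq, SetLike.coe_sort_coe, Module.natCard_eq_pow_finrank (K := F),
    Nat.card_eq_fintype_card]
  congr 1
  omega

lemma ncard_setOf_dotProduct_self_eq_zero :
    {v : Fin 3 → F | v ⬝ᵥ v = 0}.ncard = Fintype.card F ^ 2 := by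
  classical
  by_cases hF : ringChar F = 2
  · have : CharP F 2 := CharP.congr (ringChar F) hF
    have hplane : {v : Fin 3 → F | v ⬝ᵥ v = 0} = {v | (fun _ => 1) ⬝ᵥ v = 0} := by
      ext v
      simp [dotProduct, ← sq, ← sum_pow_char 2]
    rw [hplane, ncard_setOf_dotProduct_eq_zero (Function.ne_iff.2 ⟨0, one_ne_zero⟩)]
    rfl
  · exact_mod_cast ncard_setOf_dotProduct_self_eq_zero_of_ringChar_ne_two hF

end DotProduct

namespace Projectivization

section Cone

variable {k V : Type*} [Field k] [AddCommGroup V] [Module k V]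

def cone (S : Set (ℙ k V)) : Set V := {v | ∀ hv : v ≠ 0, mk k v hv ∈ S}

lemma ncard_cone [Finite V] (S : Set (ℙ k V)) :
    (cone S).ncard = S.ncard * (Nat.card k - 1) + 1 := by
  have hcone : cone S = insert 0 (Subtype.val '' {v : {v : V // v ≠ 0} | mk' k v ∈ S}) := by
    ext v
    by_cases hv : v = 0
    · simp [cone, hv]
    · simp [cone, hv, mk'_eq_mk]
  have hpunctured :
      {v : {v : V // v ≠ 0} | mk' k v ∈ S}.ncard = S.ncard * (Nat.card k - 1) := by
    rw [← Nat.card_coe_set_eq, ← Nat.card_coe_set_eq, ← Nat.card_units k, ← Nat.card_prod]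
    -- the first component of `nonZeroEquivProjectivizationProdUnits k V v` is `mk' k v` by `rfl`
    refine Nat.card_congr <| ((nonZeroEquivProjectivizationProdUnits k V).subtypeEquiv
      (q := fun x => x.1 ∈ S ∧ True) fun _ => (iff_of_eq (and_true _)).symm).trans ?_
    exact Equiv.subtypeProdEquivProd.trans
      (Equiv.prodCongr (Equiv.refl _) (Equiv.subtypeUnivEquiv fun _ => trivial))
  rw [hcone, Set.ncard_insert_of_notMem (by simp) (Set.toFinite _),
    Set.ncard_image_of_injective _ Subtype.val_injective, hpunctured]

lemma ncard_eq_card_add_one_of_ncard_cone [Finite V] [Finite k] {S : Set (ℙ k V)}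
    (h : (cone S).ncard = Nat.card k ^ 2) : S.ncard = Nat.card k + 1 := by
  have hq : 1 < Nat.card k := Finite.one_lt_card
  rw [ncard_cone] at h
  refine Nat.eq_of_mul_eq_mul_right (Nat.sub_pos_of_lt hq) ?_
  zify [hq.le] at h ⊢
  linear_combination h

end Cone

section Orthogonal

variable {F : Type*} [Field F] {m : Type*} [Fintype m]

lemma orthogonal_mk_iff (x : ℙ F (m → F)) {v : m → F} (hv : v ≠ 0) :
    orthogonal x (mk F v hv) ↔ x.rep ⬝ᵥ v = 0 := by
  simpa only [mk_rep] using orthogonal_mk x.rep_nonzero hv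

lemma orthogonal_iff_rep (x y : ℙ F (m → F)) :
    orthogonal x y ↔ x.rep ⬝ᵥ y.rep = 0 := by
  simpa only [mk_rep] using orthogonal_mk_iff x y.rep_nonzero

lemma cone_setOf_orthogonal (x : ℙ F (m → F)) :
    cone {y | orthogonal x y} = {v | x.rep ⬝ᵥ v = 0} := by
  ext v
  by_cases hv : v = 0
  · simp [cone, hv]
  · simp [cone, hv, orthogonal_mk_iff]

lemma cone_setOf_orthogonal_self :
    cone {x : ℙ F (m → F) | orthogonal x x} = {v | v ⬝ᵥ v = 0} := by
  ext v
  by_cases hv : v = 0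
  · simp [cone, hv]
  · simp [cone, hv, orthogonal_mk]

variable [Fintype F]

lemma ncard_setOf_orthogonal (x : ℙ F (Fin 3 → F)) :
    {y | orthogonal x y}.ncard = Fintype.card F + 1 := by
  rw [← Nat.card_eq_fintype_card]
  refine ncard_eq_card_add_one_of_ncard_cone ?_
  rw [cone_setOf_orthogonal, ncard_setOf_dotProduct_eq_zero x.rep_nonzero, Nat.card_eq_fintype_card]
  rfl

lemma ncard_setOf_orthogonal_self :
    {x : ℙ F (Fin 3 → F) | orthogonal x x}.ncard = Fintype.card F + 1 := by
  rw [← Nat.card_eq_fintype_card]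
  refine ncard_eq_card_add_one_of_ncard_cone ?_
  rw [cone_setOf_orthogonal_self, ncard_setOf_dotProduct_self_eq_zero, Nat.card_eq_fintype_card]

end Orthogonal

lemma eq_of_orthogonal_of_orthogonal_self {F : Type*} [Field F] {x y : ℙ F (Fin 3 → F)}
    (hx : orthogonal x x) (hy : orthogonal y y) (hxy : orthogonal x y) : x = y := by
  induction x with | h v hv =>
  induction y with | h w hw =>
  rw [orthogonal_mk] at hx hy hxy
  rw [mk_eq_mk_iff_crossProduct_eq_zero]
  by_contra hc
  have hvc : v ⨯₃ (v ⨯₃ w) = 0 := by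
    rw [cross_cross_eq_smul_sub_smul', hxy, hx, zero_smul, zero_smul, sub_zero]
  have hwc : w ⨯₃ (v ⨯₃ w) = 0 := by
    rw [cross_cross_eq_smul_sub_smul', hy, hxy, zero_smul, zero_smul, sub_zero]
  exact hc <| (mk_eq_mk_iff_crossProduct_eq_zero hv hw).1 <|
    ((mk_eq_mk_iff_crossProduct_eq_zero hv hc).2 hvc).trans
      ((mk_eq_mk_iff_crossProduct_eq_zero hw hc).2 hwc).symm

end Projectivization

open Projectivization

section OrthoGraph

variable {F : Type*} [Field F]

lemma orthoGraph_adj_iff {n : ℕ} {x y : ℙ F (Fin n → F)} :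
    (orthoGraph F n).Adj x y ↔ x ≠ y ∧ orthogonal x y := by
  rw [orthogonal_iff_rep]
  rfl

lemma neighborSet_orthoGraph {n : ℕ} (x : ℙ F (Fin n → F)) :
    (orthoGraph F n).neighborSet x = {y | orthogonal x y} \ {x} := by
  ext y
  simp [orthoGraph_adj_iff, and_comm, eq_comm]

variable [Fintype F]

lemma ncard_neighborSet_orthoGraph_of_orthogonal_self {x : ℙ F (Fin 3 → F)}
    (hx : orthogonal x x) : ((orthoGraph F 3).neighborSet x).ncard = Fintype.card F := by
  rw [neighborSet_orthoGraph,
    Set.ncard_sdiff_singleton_of_mem (show x ∈ {y | orthogonal x y} from hx),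
    ncard_setOf_orthogonal, Nat.add_sub_cancel]

lemma ncard_neighborSet_orthoGraph_of_not_orthogonal_self {x : ℙ F (Fin 3 → F)}
    (hx : ¬ orthogonal x x) :
    ((orthoGraph F 3).neighborSet x).ncard = Fintype.card F + 1 := by
  rw [neighborSet_orthoGraph, Set.sdiff_singleton_eq_self (show x ∉ {y | orthogonal x y} from hx),
    ncard_setOf_orthogonal]

end OrthoGraph

/-- Basic properties of the Erdős–Rényi graph `ER_q` (the orthogonality graph of
`F³`): the absolute points `[x]` (those with `x·x = 0`) are exactly the vertices
of degree `q`, every other vertex has degree `q + 1`, there are exactly `q + 1`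
absolute points, and the absolute points form an independent set. -/
theorem erdosRenyi_graph_properties (F : Type*) [Field F] [Fintype F] :
    (∀ x : Projectivization F (Fin 3 → F),
        ((orthoGraph F 3).neighborSet x).ncard = Fintype.card F ↔
          ∑ i, x.rep i * x.rep i = 0) ∧
    (∀ x : Projectivization F (Fin 3 → F), ¬ (∑ i, x.rep i * x.rep i = 0) →
        ((orthoGraph F 3).neighborSet x).ncard = Fintype.card F + 1) ∧
    ({x : Projectivization F (Fin 3 → F) | ∑ i, x.rep i * x.rep i = 0}.ncard
        = Fintype.card F + 1) ∧
    (∀ x y : Projectivization F (Fin 3 → F), (∑ i, x.rep i * x.rep i = 0) →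
        (∑ i, y.rep i * y.rep i = 0) → ¬ (orthoGraph F 3).Adj x y) := by
  have habsolute (x : ℙ F (Fin 3 → F)) : (∑ i, x.rep i * x.rep i = 0) ↔ orthogonal x x :=
    (orthogonal_iff_rep x x).symm
  simp only [habsolute]
  refine ⟨fun x => ⟨fun hdeg => ?_, ncard_neighborSet_orthoGraph_of_orthogonal_self⟩,
    fun x => ncard_neighborSet_orthoGraph_of_not_orthogonal_self, ncard_setOf_orthogonal_self,
    fun x y hx hy hadj => ?_⟩
  · by_contra hx
    rw [ncard_neighborSet_orthoGraph_of_not_orthogonal_self hx] at hdeg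
    omega
  · obtain ⟨hne, hxy⟩ := orthoGraph_adj_iff.1 hadj
    exact hne (eq_of_orthogonal_of_orthogonal_self hx hy hxy)
end
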